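/- arXiv:2201.03039 — 3 statements merged into one kernel-verified Lean document; each statement's English description precedes it below -/
import Mathlib

section
/- Let H be a complex Hilbert space and let φ, ψ ∈ H be unit vectors. Let E : H → H be a continuous linear operator which is positive and such that id − E is also positive (i.e. E is an effect operator, 0 ≤ E ≤ id). Then re⟨φ, E φ⟩ + re⟨ψ, (id − E) ψ⟩ ≤ 1 + √(1 − |⟨φ, ψ⟩|²). (Equivalently: in an equal-prior guessing game between the two pure states φ and ψ, any quantum measurement guesses correctly with probability at most (1 + √(1 − F²))/2, where F = |⟨φ, ψ⟩| is the fidelity of the two states.) -/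
/-!
Multiplying ψ by a phase changes neither side of the inequality except the overlap, which can
thus be taken real: `re ⟪φ, ψ⟫ = |⟪φ, ψ⟫| = F`. Put `u = φ - ψ` and `v = φ + ψ`. By symmetry of
`E` and `1 - E`, `re ⟪u, E v⟫ = ⟪φ, E φ⟫ - ⟪ψ, E ψ⟫` and `re ⟪u, (1 - E) v⟫` is its negative, while
`‖u‖ ‖v‖ = 2 √(1 - F²)`. Cauchy–Schwarz for the semi-inner products `⟪·, E ·⟫` and `⟪·, (1 - E) ·⟫`,
followed by Cauchy–Schwarz in `ℝ²`, gives `|re ⟪u, E v⟫| + |re ⟪u, (1 - E) v⟫| ≤ ‖u‖ ‖v‖`.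
-/

open scoped InnerProductSpace
open RCLike

theorem abs_add_abs_le_sqrt_mul_of_sq_le_mul {x y p q p' q' : ℝ} (hp : 0 ≤ p) (hq : 0 ≤ q)
    (hp' : 0 ≤ p') (hq' : 0 ≤ q') (hx : x ^ 2 ≤ p * q) (hy : y ^ 2 ≤ p' * q') :
    |x| + |y| ≤ √((p + p') * (q + q')) := by
  have hxy : 2 * (|x| * |y|) ≤ p * q' + p' * q := by
    have hsq : (2 * (|x| * |y|)) ^ 2 ≤ (p * q' + p' * q) ^ 2 := by
      nlinarith [sq_abs x, sq_abs y, sq_nonneg (p * q' - p' * q), mul_nonneg hp hq,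
        mul_nonneg hp' hq', mul_nonneg (sq_nonneg x) (sq_nonneg y)]
    exact (le_abs_self _).trans (abs_le_of_sq_le_sq hsq (by positivity))
  rw [Real.le_sqrt (by positivity) (by positivity)]
  nlinarith [sq_abs x, sq_abs y]

theorem LinearMap.IsSymmetric.re_inner_sub_map_add {𝕜 E : Type*} [RCLike 𝕜]
    [SeminormedAddCommGroup E] [InnerProductSpace 𝕜 E] {T : E →ₗ[𝕜] E} (hT : T.IsSymmetric)
    (x y : E) : re ⟪x - y, T (x + y)⟫_𝕜 = re ⟪x, T x⟫_𝕜 - re ⟪y, T y⟫_𝕜 := by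
  have hxy : re ⟪x, T y⟫_𝕜 = re ⟪y, T x⟫_𝕜 := by rw [← hT, ← inner_conj_symm, conj_re]
  simp only [map_add, inner_sub_left, inner_add_right, map_sub]
  linarith

section

variable {H : Type*} [NormedAddCommGroup H] [InnerProductSpace ℂ H]

theorem inner_smul_map_smul_of_norm_eq_one {c : ℂ} (hc : ‖c‖ = 1) (T : H →L[ℂ] H) (x : H) :
    ⟪c • x, T (c • x)⟫_ℂ = ⟪x, T x⟫_ℂ := by
  rw [map_smul, inner_smul_left, inner_smul_right, ← mul_assoc, Complex.conj_mul', hc]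
  simp

theorem ContinuousLinearMap.IsPositive.norm_inner_map_sq_le [CompleteSpace H] {T : H →L[ℂ] H}
    (hT : T.IsPositive) (x y : H) :
    ‖⟪x, T y⟫_ℂ‖ ^ 2 ≤ re ⟪x, T x⟫_ℂ * re ⟪y, T y⟫_ℂ := by
  obtain ⟨S, rfl⟩ := CStarAlgebra.nonneg_iff_eq_star_mul_self.mp
    ((ContinuousLinearMap.nonneg_iff_isPositive T).mpr hT)
  have hS : ∀ u v : H, ⟪u, (star S * S) v⟫_ℂ = ⟪S u, S v⟫_ℂ := fun u v => by
    rw [ContinuousLinearMap.star_eq_adjoint, mul_apply_eq_comp,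
      ContinuousLinearMap.adjoint_inner_right]
  simp only [hS, inner_self_eq_norm_sq, ← mul_pow]
  exact pow_le_pow_left₀ (norm_nonneg _) (norm_inner_le_norm _ _) 2

theorem abs_re_inner_map_add_abs_re_inner_id_sub_map_le [CompleteSpace H] {E : H →L[ℂ] H}
    (hE : E.IsPositive) (hE' : (ContinuousLinearMap.id ℂ H - E).IsPositive) (u v : H) :
    |re ⟪u, E v⟫_ℂ| + |re ⟪u, (ContinuousLinearMap.id ℂ H - E) v⟫_ℂ| ≤ ‖u‖ * ‖v‖ := by
  have hsplit : ∀ x : H, re ⟪x, E x⟫_ℂ + re ⟪x, (ContinuousLinearMap.id ℂ H - E) x⟫_ℂ = ‖x‖ ^ 2 :=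
    fun x => by
      rw [← map_add, ← inner_add_right, sub_apply, add_sub_cancel,
        ContinuousLinearMap.id_apply, inner_self_eq_norm_sq]
  have hre_sq : ∀ z : ℂ, re z ^ 2 ≤ ‖z‖ ^ 2 := fun z => by
    simpa [sq_abs] using pow_le_pow_left₀ (abs_nonneg _) (abs_re_le_norm z) 2
  have h := abs_add_abs_le_sqrt_mul_of_sq_le_mul (hE.re_inner_nonneg_right u)
    (hE.re_inner_nonneg_right v) (hE'.re_inner_nonneg_right u) (hE'.re_inner_nonneg_right v)
    ((hre_sq _).trans (hE.norm_inner_map_sq_le u v))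
    ((hre_sq _).trans (hE'.norm_inner_map_sq_le u v))
  rwa [hsplit, hsplit, ← mul_pow, Real.sqrt_sq (by positivity)] at h

theorem re_inner_map_add_re_inner_id_sub_map_le [CompleteSpace H] {E : H →L[ℂ] H}
    (hE : E.IsPositive) (hE' : (ContinuousLinearMap.id ℂ H - E).IsPositive) {φ ψ : H}
    (hφ : ‖φ‖ = 1) (hψ : ‖ψ‖ = 1) :
    re ⟪φ, E φ⟫_ℂ + re ⟪ψ, (ContinuousLinearMap.id ℂ H - E) ψ⟫_ℂ
      ≤ 1 + √(1 - re ⟪φ, ψ⟫_ℂ ^ 2) := by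
  have hcomplement : ∀ x : H, ‖x‖ = 1 →
      re ⟪x, (ContinuousLinearMap.id ℂ H - E) x⟫_ℂ = 1 - re ⟪x, E x⟫_ℂ := fun x hx => by
    rw [sub_apply, inner_sub_right, map_sub, ContinuousLinearMap.id_apply,
      inner_self_eq_norm_sq, hx, one_pow]
  have hnorms : ‖φ - ψ‖ * ‖φ + ψ‖ = 2 * √(1 - re ⟪φ, ψ⟫_ℂ ^ 2) := by
    have hsq : (‖φ - ψ‖ * ‖φ + ψ‖) ^ 2 = 2 ^ 2 * (1 - re ⟪φ, ψ⟫_ℂ ^ 2) := by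
      rw [mul_pow, norm_sub_sq (𝕜 := ℂ), norm_add_sq (𝕜 := ℂ), hφ, hψ]
      ring
    rw [← Real.sqrt_sq (by positivity : 0 ≤ ‖φ - ψ‖ * ‖φ + ψ‖), hsq,
      Real.sqrt_mul (by positivity), Real.sqrt_sq zero_le_two]
  have h := abs_re_inner_map_add_abs_re_inner_id_sub_map_le hE hE' (φ - ψ) (φ + ψ)
  have hE_sub := hE.isSymmetric.re_inner_sub_map_add φ ψ
  have hE'_sub := hE'.isSymmetric.re_inner_sub_map_add φ ψ
  simp only [ContinuousLinearMap.coe_coe] at hE_sub hE'_sub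
  rw [hE_sub, hE'_sub, hcomplement φ hφ, hcomplement ψ hψ, hnorms] at h
  rw [hcomplement ψ hψ]
  linarith [le_abs_self (re ⟪φ, E φ⟫_ℂ - re ⟪ψ, E ψ⟫_ℂ),
    neg_le_abs (1 - re ⟪φ, E φ⟫_ℂ - (1 - re ⟪ψ, E ψ⟫_ℂ))]

end

/-- **Helstrom state-discrimination bound.**
For unit vectors `φ ψ` in a complex Hilbert space and an effect operator `E`
(i.e. `0 ≤ E ≤ id`), one has
`re⟨φ, E φ⟩ + re⟨ψ, (id − E) ψ⟩ ≤ 1 + √(1 − |⟨φ, ψ⟩|²)`. -/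
theorem helstrom_bound {H : Type*} [NormedAddCommGroup H] [InnerProductSpace ℂ H]
    [CompleteSpace H] (φ ψ : H) (hφ : ‖φ‖ = 1) (hψ : ‖ψ‖ = 1)
    (E : H →L[ℂ] H) (hE : E.IsPositive)
    (hE' : (ContinuousLinearMap.id ℂ H - E).IsPositive) :
    (inner ℂ φ (E φ) : ℂ).re + (inner ℂ ψ ((ContinuousLinearMap.id ℂ H - E) ψ) : ℂ).re
      ≤ 1 + Real.sqrt (1 - ‖(inner ℂ φ ψ : ℂ)‖ ^ 2) := by
  obtain ⟨c, hc, hcz⟩ : ∃ c : ℂ, ‖c‖ = 1 ∧ re ⟪φ, c • ψ⟫_ℂ = ‖⟪φ, ψ⟫_ℂ‖ := by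
    refine ⟨Complex.exp (↑(-(⟪φ, ψ⟫_ℂ).arg) * Complex.I), Complex.norm_exp_ofReal_mul_I _, ?_⟩
    conv_lhs => rw [inner_smul_right, ← Complex.norm_mul_exp_arg_mul_I ⟪φ, ψ⟫_ℂ]
    rw [mul_left_comm, ← Complex.exp_add]
    simp
  have h := re_inner_map_add_re_inner_id_sub_map_le hE hE' hφ
    (by rwa [norm_smul, hc, one_mul] : ‖c • ψ‖ = 1)
  rwa [inner_smul_map_smul_of_norm_eq_one hc, hcz] at h
end

section
/- Let μ > 0 and θ ∈ ℝ, and set α = √μ·e^{iθ}. Then for all m, n ∈ ℕ: (c_α(m)·c_α(n) + c_{−α}(m)·c_{−α}(n))/2 = e^{i(m+n)θ}·√(P_{m+n|2μ})·√((m+n)!/(2^{m+n}·m!·n!)) if m+n is even, and equals 0 if m+n is odd. (In other words, the two-mode cat state (|α⟩_a|α⟩_b + |−α⟩_a|−α⟩_b)/2 equals Σ_{j even} e^{ijθ}√(P_{j|2μ}) |j⟩_{ab}, where |j⟩_{ab} = Σ_{i=0}^{j} √(j!/(2^j i!(j−i)!)) |i⟩_a|j−i⟩_b.) -/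
/-!
Since `c_α(m) c_α(n) = e^{-|α|²} α^{m+n} / √(m! n!)` and `c_{-α}(n) = (-1)^n c_α(n)`, averaging
the two branches of the cat state cancels odd `m + n` and keeps the product for even `m + n`.
For `α = √μ e^{iθ}` what remains is the real identity
`P_{j|2μ} · j! / (2^j m! n!) = (e^{-μ} √μ^j)² / (m! n!)` with `j = m + n`.
-/

/-- Coherent-state coefficient: `c_α(n) = e^{−|α|²/2} α^n / √(n!)`. -/
noncomputable def coherentCoeff (α : ℂ) (n : ℕ) : ℂ :=
  Complex.exp (-(‖α‖ : ℂ) ^ 2 / 2) * α ^ n / (Real.sqrt (Nat.factorial n) : ℂ)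

/-- Poisson probability with mean `lam`: `P_{j|lam} = e^{−lam} lam^j / j!`. -/
noncomputable def poisson (lam : ℝ) (j : ℕ) : ℝ :=
  Real.exp (-lam) * lam ^ j / (Nat.factorial j : ℝ)

theorem coherentCoeff_mul (α : ℂ) (m n : ℕ) :
    coherentCoeff α m * coherentCoeff α n =
      Complex.exp (-(‖α‖ : ℂ) ^ 2) * α ^ (m + n)
        / ((Real.sqrt (Nat.factorial m) : ℂ) * (Real.sqrt (Nat.factorial n) : ℂ)) := by
  have hexp : Complex.exp (-(‖α‖ : ℂ) ^ 2) =
      Complex.exp (-(‖α‖ : ℂ) ^ 2 / 2) * Complex.exp (-(‖α‖ : ℂ) ^ 2 / 2) := by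
    rw [← Complex.exp_add, add_halves]
  rw [coherentCoeff, coherentCoeff, hexp, pow_add]
  ring

theorem coherentCoeff_neg (α : ℂ) (n : ℕ) :
    coherentCoeff (-α) n = (-1) ^ n * coherentCoeff α n := by
  rw [coherentCoeff, coherentCoeff, norm_neg, neg_pow]
  ring

theorem coherentCoeff_neg_mul_neg (α : ℂ) (m n : ℕ) :
    coherentCoeff (-α) m * coherentCoeff (-α) n =
      (-1) ^ (m + n) * (coherentCoeff α m * coherentCoeff α n) := by
  rw [coherentCoeff_neg, coherentCoeff_neg, pow_add]
  ring

theorem add_neg_one_pow_mul_div_two {K : Type*} [DivisionRing K] [NeZero (2 : K)]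
    (k : ℕ) (x : K) :
    (x + (-1) ^ k * x) / 2 = if Even k then x else 0 := by
  split_ifs with hk
  · rw [hk.neg_one_pow, one_mul, add_self_div_two]
  · rw [(Nat.not_even_iff_odd.mp hk).neg_one_pow, neg_one_mul, add_neg_cancel, zero_div]

theorem norm_ofReal_sqrt_mul_exp (μ θ : ℝ) :
    ‖(Real.sqrt μ : ℂ) * Complex.exp (θ * Complex.I)‖ = Real.sqrt μ := by
  rw [norm_mul, Complex.norm_exp_ofReal_mul_I, mul_one, Complex.norm_real,
    Real.norm_of_nonneg (Real.sqrt_nonneg μ)]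

theorem ofReal_sqrt_mul_exp_pow (μ θ : ℝ) (k : ℕ) :
    ((Real.sqrt μ : ℂ) * Complex.exp (θ * Complex.I)) ^ k =
      (Real.sqrt μ : ℂ) ^ k * Complex.exp (k * θ * Complex.I) := by
  rw [mul_pow, ← Complex.exp_nat_mul, mul_assoc]

theorem poisson_two_mul_mul_div_eq_sq (μ : ℝ) (hμ : 0 ≤ μ) (m n : ℕ) :
    poisson (2 * μ) (m + n)
        * ((Nat.factorial (m + n) : ℝ) / (2 ^ (m + n) * Nat.factorial m * Nat.factorial n)) =
      (Real.exp (-μ) * Real.sqrt μ ^ (m + n)) ^ 2 / (Nat.factorial m * Nat.factorial n) := by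
  rw [mul_pow, ← pow_mul, mul_comm (m + n), pow_mul, Real.sq_sqrt hμ, poisson,
    ← Real.exp_nat_mul, mul_pow]
  field_simp
  ring_nf

theorem sqrt_poisson_two_mul_mul_sqrt (μ : ℝ) (hμ : 0 ≤ μ) (m n : ℕ) :
    Real.sqrt (poisson (2 * μ) (m + n))
        * Real.sqrt ((Nat.factorial (m + n) : ℝ)
            / (2 ^ (m + n) * Nat.factorial m * Nat.factorial n)) =
      Real.exp (-μ) * Real.sqrt μ ^ (m + n)
        / (Real.sqrt (Nat.factorial m) * Real.sqrt (Nat.factorial n)) := by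
  rw [← Real.sqrt_mul (by unfold poisson; positivity), poisson_two_mul_mul_div_eq_sq μ hμ,
    Real.sqrt_div' _ (by positivity), Real.sqrt_sq (by positivity),
    Real.sqrt_mul (by positivity)]

/-- The in-phase two-mode cat state `(|α⟩|α⟩ + |−α⟩|−α⟩)/2` has photon-number
coefficients `e^{i(m+n)θ} √(P_{m+n|2μ}) √((m+n)!/(2^{m+n} m! n!))` when `m+n` is even,
and `0` when `m+n` is odd. -/
theorem cat_state_even_decomposition (μ θ : ℝ) (hμ : 0 < μ) (α : ℂ)
    (hα : α = (Real.sqrt μ : ℂ) * Complex.exp (θ * Complex.I)) (m n : ℕ) :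
    (coherentCoeff α m * coherentCoeff α n
        + coherentCoeff (-α) m * coherentCoeff (-α) n) / 2 =
      if Even (m + n) then
        Complex.exp ((m + n : ℕ) * θ * Complex.I)
          * (Real.sqrt (poisson (2 * μ) (m + n)) : ℂ)
          * (Real.sqrt ((Nat.factorial (m + n) : ℝ)
              / (2 ^ (m + n) * Nat.factorial m * Nat.factorial n)) : ℂ)
      else 0 := by
  rw [coherentCoeff_neg_mul_neg, add_neg_one_pow_mul_div_two]
  split_ifs
  · have hnorm : (‖α‖ : ℂ) ^ 2 = μ := by
      rw [hα, norm_ofReal_sqrt_mul_exp, ← Complex.ofReal_pow, Real.sq_sqrt hμ.le]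
    rw [coherentCoeff_mul, hnorm, mul_assoc, ← Complex.ofReal_mul (Real.sqrt (poisson _ _)),
      sqrt_poisson_two_mul_mul_sqrt μ hμ.le, hα, ofReal_sqrt_mul_exp_pow]
    push_cast
    ring
  · rfl
end

section
/- Let μ > 0 and θ ∈ ℝ, and set α = √μ·e^{iθ}. Then for all m, n ∈ ℕ: (c_α(m)·c_{−α}(n) + c_{−α}(m)·c_α(n))/2 = (−1)^m·e^{i(m+n)θ}·√(P_{m+n|2μ})·√((m+n)!/(2^{m+n}·m!·n!)) if m+n is even, and equals 0 if m+n is odd. (In other words, the anti-phase two-mode cat state (|α⟩_a|−α⟩_b + |−α⟩_a|α⟩_b)/2 equals Σ_{j even} e^{ijθ}√(P_{j|2μ}) |j⟩'_{ab}, where |j⟩'_{ab} = Σ_{i=0}^{j} (−1)^i √(j!/(2^j i!(j−i)!)) |i⟩_a|j−i⟩_b.) -/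
/-!
Since `c_{−α}(n) = (−1)^n c_α(n)`, the symmetrised product is
`((−1)^m + (−1)^n)/2 · c_α(m) c_α(n)`, which vanishes for `m + n` odd and is
`(−1)^m c_α(m) c_α(n)` otherwise. For `α = √μ e^{iθ}` one has `c_α(n) = e^{inθ} √(P_{n|μ})`,
and two independent Poisson variables of mean `μ` are one of mean `2μ` split binomially:
`P_{m|μ} P_{n|μ} = P_{m+n|2μ} · binom(m+n, m) / 2^{m+n}`.
-/

theorem neg_one_pow_add_neg_one_pow_div_two {K : Type*} [Field K] [NeZero (2 : K)] (m n : ℕ) :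
    ((-1 : K) ^ m + (-1) ^ n) / 2 = if Even (m + n) then (-1) ^ m else 0 := by
  rcases Nat.even_or_odd m with hm | hm <;> rcases Nat.even_or_odd n with hn | hn
  · simp [hm.neg_one_pow, hn.neg_one_pow, hm.add hn]
  · simp [hm.neg_one_pow, hn.neg_one_pow, Nat.not_even_iff_odd.2 (hm.add_odd hn)]
  · simp [hm.neg_one_pow, hn.neg_one_pow, Nat.not_even_iff_odd.2 (hm.add_even hn)]
  · simp [hm.neg_one_pow, hn.neg_one_pow, hm.add_odd hn]

theorem poisson_nonneg {lam : ℝ} (hlam : 0 ≤ lam) (j : ℕ) : 0 ≤ poisson lam j := by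
  unfold poisson; positivity

theorem sqrt_poisson {μ : ℝ} (hμ : 0 ≤ μ) (n : ℕ) :
    Real.sqrt (poisson μ n)
      = Real.exp (-μ / 2) * Real.sqrt μ ^ n / Real.sqrt (Nat.factorial n) := by
  rw [Real.sqrt_eq_iff_eq_sq (poisson_nonneg hμ n) (by positivity), div_pow, mul_pow, ← pow_mul,
    mul_comm n, pow_mul, Real.sq_sqrt hμ, Real.sq_sqrt (Nat.cast_nonneg _), ← Real.exp_nat_mul,
    poisson]
  ring_nf

theorem coherentCoeff_sqrt_mul_exp {μ : ℝ} (hμ : 0 ≤ μ) (θ : ℝ) (n : ℕ) :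
    coherentCoeff ((Real.sqrt μ : ℂ) * Complex.exp (θ * Complex.I)) n
      = Complex.exp (n * θ * Complex.I) * (Real.sqrt (poisson μ n) : ℂ) := by
  have hnorm : ‖(Real.sqrt μ : ℂ) * Complex.exp (θ * Complex.I)‖ = Real.sqrt μ := by
    rw [norm_mul, Complex.norm_exp_ofReal_mul_I, Complex.norm_of_nonneg (Real.sqrt_nonneg μ),
      mul_one]
  rw [coherentCoeff, hnorm, sqrt_poisson hμ, mul_pow, ← Complex.exp_nat_mul]
  push_cast
  rw [← Complex.ofReal_pow, Real.sq_sqrt hμ]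
  ring_nf

theorem poisson_mul_poisson (μ : ℝ) (m n : ℕ) :
    poisson μ m * poisson μ n
      = poisson (2 * μ) (m + n)
        * ((Nat.factorial (m + n) : ℝ) / (2 ^ (m + n) * Nat.factorial m * Nat.factorial n)) := by
  have hexp : Real.exp (-(2 * μ)) = Real.exp (-μ) * Real.exp (-μ) := by
    rw [← Real.exp_add]; ring_nf
  simp only [poisson, hexp, mul_pow, pow_add]
  field_simp

theorem coherentCoeff_mul_coherentCoeff_sqrt_mul_exp {μ : ℝ} (hμ : 0 ≤ μ) (θ : ℝ) (m n : ℕ) :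
    coherentCoeff ((Real.sqrt μ : ℂ) * Complex.exp (θ * Complex.I)) m
        * coherentCoeff ((Real.sqrt μ : ℂ) * Complex.exp (θ * Complex.I)) n
      = Complex.exp ((m + n : ℕ) * θ * Complex.I)
          * (Real.sqrt (poisson (2 * μ) (m + n)) : ℂ)
          * (Real.sqrt ((Nat.factorial (m + n) : ℝ)
              / (2 ^ (m + n) * Nat.factorial m * Nat.factorial n)) : ℂ) := by
  rw [coherentCoeff_sqrt_mul_exp hμ, coherentCoeff_sqrt_mul_exp hμ, mul_mul_mul_comm,
    ← Complex.exp_add, ← Complex.ofReal_mul, ← Real.sqrt_mul' _ (poisson_nonneg hμ n),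
    poisson_mul_poisson, Real.sqrt_mul (poisson_nonneg (by positivity) _), Nat.cast_add, add_mul,
    add_mul, Complex.ofReal_mul]
  ring

/-- The anti-phase two-mode cat state `(|α⟩|−α⟩ + |−α⟩|α⟩)/2` has photon-number
coefficients `(−1)^m e^{i(m+n)θ} √(P_{m+n|2μ}) √((m+n)!/(2^{m+n} m! n!))` when
`m+n` is even, and `0` when `m+n` is odd. -/
theorem antiphase_cat_state_even_decomposition (μ θ : ℝ) (hμ : 0 < μ) (α : ℂ)
    (hα : α = (Real.sqrt μ : ℂ) * Complex.exp (θ * Complex.I)) (m n : ℕ) :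
    (coherentCoeff α m * coherentCoeff (-α) n
        + coherentCoeff (-α) m * coherentCoeff α n) / 2 =
      if Even (m + n) then
        (-1 : ℂ) ^ m * Complex.exp ((m + n : ℕ) * θ * Complex.I)
          * (Real.sqrt (poisson (2 * μ) (m + n)) : ℂ)
          * (Real.sqrt ((Nat.factorial (m + n) : ℝ)
              / (2 ^ (m + n) * Nat.factorial m * Nat.factorial n)) : ℂ)
      else 0 := by
  have hsymm : (coherentCoeff α m * coherentCoeff (-α) n
        + coherentCoeff (-α) m * coherentCoeff α n) / 2
      = ((-1 : ℂ) ^ m + (-1) ^ n) / 2 * (coherentCoeff α m * coherentCoeff α n) := by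
    rw [coherentCoeff_neg, coherentCoeff_neg]; ring
  rw [hsymm, neg_one_pow_add_neg_one_pow_div_two, hα,
    coherentCoeff_mul_coherentCoeff_sqrt_mul_exp hμ.le]
  split_ifs
  · ring
  · rw [zero_mul]
end
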